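/- Let S denote the unilateral shift on ℓ²(ℕ). On the Hilbert space H = ℓ²(ℕ) ⊕ (⊕_{j=1}^∞ ℓ²(ℕ)) ⊕ (⊕_{j=1}^∞ ℓ²(ℕ)), the operator T = S ⊕ (⊕_{j=1}^∞ (j/(j+1)) S) ⊕ (⊕_{j=1}^∞ (j/(j+1)) S*) is not complex symmetric: there is no conjugation C on H with T = C T* C. -/

import Mathlib

open Filter ContinuousLinearMap

noncomputable section

/-- A conjugation on a complex Hilbert space `H` is a conjugate-linear, isometric
involution `C : H → H`. -/
def IsConjugation {H : Type*} [NormedAddCommGroup H] [InnerProductSpace ℂ H]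
    (C : H → H) : Prop :=
  (∀ x y : H, C (x + y) = C x + C y) ∧
  (∀ (a : ℂ) (x : H), C (a • x) = (starRingEnd ℂ) a • C x) ∧
  (∀ x : H, ‖C x‖ = ‖x‖) ∧
  (∀ x : H, C (C x) = x)

/-- A bounded operator `T` on a complex Hilbert space is complex symmetric if there is a
conjugation `C` with `T = C T* C`. -/
def IsComplexSymmetric {H : Type*} [NormedAddCommGroup H] [InnerProductSpace ℂ H]
    [CompleteSpace H] (T : H →L[ℂ] H) : Prop :=
  ∃ C : H → H, IsConjugation C ∧
    ∀ x : H, T x = C (ContinuousLinearMap.adjoint T (C x))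

/-- `ℓ²(ℕ)` over `ℂ`. -/
abbrev ellTwo : Type := lp (fun _ : ℕ => ℂ) 2

/-- `S` is the unilateral shift on `ℓ²(ℕ)`: `S (a₀, a₁, a₂, …) = (0, a₀, a₁, …)`. -/
def IsUnilateralShift (S : ellTwo →L[ℂ] ellTwo) : Prop :=
  ∀ a : ellTwo, S a 0 = 0 ∧ ∀ n : ℕ, S a (n + 1) = a n

/-- The coefficient `j/(j+1)`. -/
def coeff (j : ℕ+) : ℝ := (j : ℝ) / ((j : ℝ) + 1)

/-- `⊕_{j=1}^∞ ℓ²(ℕ)`. -/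
abbrev Bspace : Type := lp (fun _ : ℕ+ => ellTwo) 2

/-- The Hilbert space `H = ℓ²(ℕ) ⊕ (⊕_{j=1}^∞ ℓ²(ℕ)) ⊕ (⊕_{j=1}^∞ ℓ²(ℕ))`. -/
abbrev Hspace : Type := WithLp 2 (ellTwo × WithLp 2 (Bspace × Bspace))

/-- The operator `T = S ⊕ (⊕_{j=1}^∞ (j/(j+1)) S) ⊕ (⊕_{j=1}^∞ (j/(j+1)) S*)` on `H`,
acting coordinatewise. -/
def IsTheOperatorT (S : ellTwo →L[ℂ] ellTwo) (T : Hspace →L[ℂ] Hspace) : Prop :=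
  ∀ x : Hspace,
    (T x).ofLp.1 = S x.ofLp.1 ∧
    (∀ j : ℕ+, (T x).ofLp.2.ofLp.1 j = (coeff j : ℂ) • S (x.ofLp.2.ofLp.1 j)) ∧
    (∀ j : ℕ+, (T x).ofLp.2.ofLp.2 j = (coeff j : ℂ) • ContinuousLinearMap.adjoint S (x.ofLp.2.ofLp.2 j))

/-!
A conjugation `C` with `T = C T* C` is an isometry intertwining `T` and `T*`, so it carries
`e₁ ∈ ℓ²(ℕ) ⊕ 0 ⊕ 0`, on which `T* = S* ⊕ …` satisfies `‖T* e₁‖ = ‖e₁‖` and `T*² e₁ = 0`, to a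
unit vector `x` with `‖T x‖ = ‖x‖` and `T² x = 0`. But the weights `j/(j+1) < 1` make `T` strictly
contractive off the first summand, so `‖T x‖ = ‖x‖` forces `x` into the first summand, where
`T = S` is an isometry and `T² x ≠ 0`.
-/

namespace lp

variable {ι : Type*} {E F : ι → Type*} [∀ i, NormedAddCommGroup (E i)]
  [∀ i, NormedAddCommGroup (F i)]

theorem hasSum_norm_sq (f : lp E 2) : HasSum (fun i => ‖f i‖ ^ 2) (‖f‖ ^ 2) := by
  simpa using hasSum_norm (p := 2) (by norm_num) f

theorem norm_le_norm_of_forall_norm_apply_le {f : lp E 2} {g : lp F 2}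
    (h : ∀ i, ‖g i‖ ≤ ‖f i‖) : ‖g‖ ≤ ‖f‖ :=
  (pow_le_pow_iff_left₀ (norm_nonneg _) (norm_nonneg _) two_ne_zero).mp <|
    hasSum_le (fun i => by gcongr; exact h i) (hasSum_norm_sq g) (hasSum_norm_sq f)

theorem eq_zero_of_norm_le_of_norm_apply_le_mul {f : lp E 2} {g : lp F 2} {c : ι → ℝ}
    (hc : ∀ i, c i < 1) (hgf : ∀ i, ‖g i‖ ≤ c i * ‖f i‖) (hfg : ‖f‖ ≤ ‖g‖) : f = 0 := by
  by_contra hf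
  obtain ⟨i, hi⟩ : ∃ i, f i ≠ 0 := by
    by_contra! h
    exact hf (lp.ext (funext h))
  have hle : ∀ j, ‖g j‖ ^ 2 ≤ ‖f j‖ ^ 2 := fun j => by
    gcongr
    exact (hgf j).trans (mul_le_of_le_one_left (norm_nonneg _) (hc j).le)
  have hlt : ‖g i‖ ^ 2 < ‖f i‖ ^ 2 := by
    gcongr
    exact (hgf i).trans_lt (mul_lt_of_lt_one_left (norm_pos_iff.2 hi) (hc i))
  have := hasSum_lt hle hlt (hasSum_norm_sq g) (hasSum_norm_sq f)
  nlinarith [norm_nonneg f]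

end lp

theorem IsComplexSymmetric.exists_norm_eq {H : Type*} [NormedAddCommGroup H]
    [InnerProductSpace ℂ H] [CompleteSpace H] {T : H →L[ℂ] H} (hT : IsComplexSymmetric T)
    (u : H) : ∃ x : H, ‖x‖ = ‖u‖ ∧ ‖T x‖ = ‖adjoint T u‖ ∧
      ‖T (T x)‖ = ‖adjoint T (adjoint T u)‖ := by
  obtain ⟨C, ⟨-, -, hnorm, hinv⟩, hTC⟩ := hT
  have hcomm : ∀ v, T (C v) = C (adjoint T v) := fun v => by rw [hTC, hinv]
  exact ⟨C u, hnorm u, by rw [hcomm, hnorm], by rw [hcomm, hcomm, hnorm]⟩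

theorem coeff_nonneg (j : ℕ+) : 0 ≤ coeff j := by
  unfold coeff; positivity

theorem coeff_lt_one (j : ℕ+) : coeff j < 1 := by
  unfold coeff
  rw [div_lt_one (by positivity)]
  linarith

theorem coeff_mul_le (j : ℕ+) {r : ℝ} (hr : 0 ≤ r) : coeff j * r ≤ r :=
  mul_le_of_le_one_left hr (coeff_lt_one j).le

theorem norm_coeff (j : ℕ+) : ‖(coeff j : ℂ)‖ = coeff j := by
  rw [Complex.norm_real, Real.norm_of_nonneg (coeff_nonneg j)]

namespace IsUnilateralShift

variable {S : ellTwo →L[ℂ] ellTwo} (hS : IsUnilateralShift S)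
include hS

theorem norm_apply (a : ellTwo) : ‖S a‖ = ‖a‖ := by
  have hSa := lp.hasSum_norm_sq (S a)
  have key : ∑' n, ‖S a n‖ ^ 2 = ∑' n, ‖a n‖ ^ 2 := by
    rw [hSa.summable.tsum_eq_zero_add]
    simp [(hS a).1, (hS a).2]
  rw [hSa.tsum_eq, (lp.hasSum_norm_sq a).tsum_eq] at key
  exact (sq_eq_sq₀ (norm_nonneg _) (norm_nonneg _)).mp key

theorem norm_adjoint_apply_le (a : ellTwo) : ‖adjoint S a‖ ≤ ‖a‖ := by
  have hS1 : ‖S‖ ≤ 1 := opNorm_le_bound S zero_le_one fun a => by rw [hS.norm_apply, one_mul]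
  calc ‖adjoint S a‖ ≤ ‖adjoint S‖ * ‖a‖ := (adjoint S).le_opNorm a
    _ ≤ ‖a‖ := by
      rw [LinearIsometryEquiv.norm_map]
      exact mul_le_of_le_one_left (norm_nonneg _) hS1

theorem adjoint_single_succ (n : ℕ) (c : ℂ) :
    adjoint S (lp.single 2 (n + 1) c) = lp.single 2 n c :=
  ext_inner_right ℂ fun a => by
    rw [adjoint_inner_left, lp.inner_single_left, lp.inner_single_left, (hS a).2]

theorem adjoint_single_zero (c : ℂ) : adjoint S (lp.single 2 0 c) = 0 :=
  ext_inner_right ℂ fun a => by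
    rw [adjoint_inner_left, lp.inner_single_left, (hS a).1, inner_zero_left, inner_zero_right]

end IsUnilateralShift

namespace IsTheOperatorT

variable {S : ellTwo →L[ℂ] ellTwo} {T : Hspace →L[ℂ] Hspace} (hT : IsTheOperatorT S T)
include hT

theorem adjoint_apply_toLp_zero (a : ellTwo) :
    adjoint T (WithLp.toLp 2 (a, 0)) = WithLp.toLp 2 (adjoint S a, 0) :=
  ext_inner_right ℂ fun x => by
    rw [adjoint_inner_left, WithLp.prod_inner_apply, WithLp.prod_inner_apply, (hT x).1]
    simp [adjoint_inner_left]

variable (hS : IsUnilateralShift S)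
include hS

theorem norm_apply_snd_fst_le (x : Hspace) (j : ℕ+) :
    ‖(T x).ofLp.2.ofLp.1 j‖ ≤ coeff j * ‖x.ofLp.2.ofLp.1 j‖ := by
  rw [(hT x).2.1, norm_smul, norm_coeff, hS.norm_apply]

theorem norm_apply_snd_snd_le (x : Hspace) (j : ℕ+) :
    ‖(T x).ofLp.2.ofLp.2 j‖ ≤ coeff j * ‖x.ofLp.2.ofLp.2 j‖ := by
  rw [(hT x).2.2, norm_smul, norm_coeff]
  exact mul_le_mul_of_nonneg_left (hS.norm_adjoint_apply_le _) (coeff_nonneg j)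

theorem snd_eq_zero_of_norm_apply_eq {x : Hspace} (hx : ‖T x‖ = ‖x‖) : x.ofLp.2 = 0 := by
  have hB := hT.norm_apply_snd_fst_le hS x
  have hB' := hT.norm_apply_snd_snd_le hS x
  have hle := lp.norm_le_norm_of_forall_norm_apply_le fun j =>
    (hB j).trans (coeff_mul_le j (norm_nonneg _))
  have hle' := lp.norm_le_norm_of_forall_norm_apply_le fun j =>
    (hB' j).trans (coeff_mul_le j (norm_nonneg _))
  have hsq : ‖S x.ofLp.1‖ ^ 2 + (‖(T x).ofLp.2.ofLp.1‖ ^ 2 + ‖(T x).ofLp.2.ofLp.2‖ ^ 2) =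
      ‖x.ofLp.1‖ ^ 2 + (‖x.ofLp.2.ofLp.1‖ ^ 2 + ‖x.ofLp.2.ofLp.2‖ ^ 2) := by
    have h : ‖T x‖ ^ 2 = ‖x‖ ^ 2 := by rw [hx]
    rw [WithLp.prod_norm_sq_eq_of_L2 (T x), WithLp.prod_norm_sq_eq_of_L2 x,
      WithLp.prod_norm_sq_eq_of_L2 (T x).snd, WithLp.prod_norm_sq_eq_of_L2 x.snd] at h
    rw [← (hT x).1]
    exact h
  rw [hS.norm_apply] at hsq
  have hge : ‖x.ofLp.2.ofLp.1‖ ≤ ‖(T x).ofLp.2.ofLp.1‖ := by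
    nlinarith [norm_nonneg (T x).ofLp.2.ofLp.1, norm_nonneg (T x).ofLp.2.ofLp.2]
  have hge' : ‖x.ofLp.2.ofLp.2‖ ≤ ‖(T x).ofLp.2.ofLp.2‖ := by
    nlinarith [norm_nonneg (T x).ofLp.2.ofLp.1, norm_nonneg (T x).ofLp.2.ofLp.2]
  exact WithLp.ofLp_injective 2 <| Prod.ext
    (lp.eq_zero_of_norm_le_of_norm_apply_le_mul coeff_lt_one hB hge)
    (lp.eq_zero_of_norm_le_of_norm_apply_le_mul coeff_lt_one hB' hge')

theorem norm_le_norm_apply_apply_of_norm_apply_eq {x : Hspace} (hx : ‖T x‖ = ‖x‖) :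
    ‖x‖ ≤ ‖T (T x)‖ :=
  calc ‖x‖ = ‖WithLp.toLp 2 (x.ofLp.1, (0 : WithLp 2 (Bspace × Bspace)))‖ := by
        rw [← hT.snd_eq_zero_of_norm_apply_eq hS hx]
    _ = ‖x.ofLp.1‖ := WithLp.norm_toLp_fst ..
    _ = ‖(T (T x)).ofLp.1‖ := by rw [(hT _).1, (hT x).1, hS.norm_apply, hS.norm_apply]
    _ ≤ ‖T (T x)‖ := WithLp.norm_fst_le _ _

end IsTheOperatorT

/-- The operator `T = S ⊕ (⊕_j (j/(j+1)) S) ⊕ (⊕_j (j/(j+1)) S*)` on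
`H = ℓ²(ℕ) ⊕ (⊕_{j=1}^∞ ℓ²(ℕ)) ⊕ (⊕_{j=1}^∞ ℓ²(ℕ))` is not complex symmetric: there is no
conjugation `C` on `H` with `T = C T* C`. -/
theorem T_not_complexSymmetric
    (S : ellTwo →L[ℂ] ellTwo) (hS : IsUnilateralShift S)
    (T : Hspace →L[ℂ] Hspace) (hT : IsTheOperatorT S T) :
    ¬ IsComplexSymmetric T := by
  intro hsym
  obtain ⟨x, hxu, hTx, hTTx⟩ := hsym.exists_norm_eq (WithLp.toLp 2 (lp.single 2 1 1, 0))
  have hx : ‖x‖ = 1 := by simp [hxu, lp.norm_single]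
  have hTx' : ‖T x‖ = ‖x‖ := by
    rw [hTx, hT.adjoint_apply_toLp_zero, hS.adjoint_single_succ, hx]
    simp [lp.norm_single]
  have hTTx' : ‖T (T x)‖ = 0 := by
    rw [hTTx, hT.adjoint_apply_toLp_zero, hS.adjoint_single_succ, hT.adjoint_apply_toLp_zero,
      hS.adjoint_single_zero]
    simp
  have := hT.norm_le_norm_apply_apply_of_norm_apply_eq hS hTx'
  linarith
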